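/- arXiv:1802.04842 — 3 statements merged into one kernel-verified Lean document; each statement's English description precedes it below -/
import Mathlib

section
/- Fix α > 0. Let N be a locally finite point process on ℝ̄₀ with P(N(ℝ̄₀)>0) > 0 which is strictly α-stable. Then for every f ∈ C_c^+(ℝ̄₀), either Ψ_N(f‖y) = 1 for all y > 0, or there exists a constant c_f > 0 such that Ψ_N(f‖y) = Φ_α(y·c_f) for all y > 0; in particular, if Ψ_N(f‖y₀) < 1 for some y₀ > 0 for every f ∈ C_c^+(ℝ̄₀), then the scaled Laplace functional of N is scale-uniquely supported on [Φ_α]_sc. -/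
open MeasureTheory Filter Set
open scoped ENNReal Topology

/-- `expNeg z = exp(-z)` for `z ∈ [0,∞]`, with `expNeg ∞ = 0`. -/
noncomputable def expNeg (z : ℝ≥0∞) : ℝ := if z = ∞ then 0 else Real.exp (-z.toReal)

/-- `f ∈ C_c^+(ℝ̄₀)`: a nonnegative function, continuous on `ℝ̄₀ = [-∞,∞] \ {0}`
(i.e. continuous on `ℝ` with finite limits at `±∞`), vanishing in a neighbourhood of `0`
(compact support in `ℝ̄₀` not containing `0`). -/
def IsCcPos (f : ℝ → ℝ) : Prop :=
  Continuous f ∧ (∀ x, 0 ≤ f x) ∧ (∃ ε > 0, ∀ x : ℝ, |x| < ε → f x = 0) ∧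
  (∃ L : ℝ, Tendsto f atTop (𝓝 L)) ∧ (∃ L : ℝ, Tendsto f atBot (𝓝 L))

/-- A locally finite point process on `ℝ̄₀`: a measurable family of purely atomic
`ℕ ∪ {∞}`-valued measures on `ℝ \ {0}`, a.s. finite on sets bounded away from `0`. -/
def IsPointProcess {Ω : Type*} [MeasurableSpace Ω] (μ : Measure Ω) (N : Ω → Measure ℝ) : Prop :=
  Measurable N ∧
  (∀ᵐ ω ∂μ, (N ω) {0} = 0) ∧
  (∀ᵐ ω ∂μ, ∀ b : ℝ, 0 < b → (N ω) {x : ℝ | b ≤ |x|} < ∞) ∧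
  (∀ᵐ ω ∂μ, ∀ B : Set ℝ, MeasurableSet B → (N ω) B ∈ Set.range ((↑) : ℕ → ℝ≥0∞) ∪ {∞})

/-- The scaled Laplace functional `Ψ_N(f‖y) = E[exp(-∫ f(x/y) N(dx))]`. -/
noncomputable def SLF {Ω : Type*} [MeasurableSpace Ω] (μ : Measure Ω) (N : Ω → Measure ℝ)
    (f : ℝ → ℝ) (y : ℝ) : ℝ :=
  ∫ ω, expNeg (∫⁻ x, ENNReal.ofReal (f (x / y)) ∂(N ω)) ∂μ

/-- The scaled Laplace functional of `N` is scale-uniquely supported on `[g]_sc`: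
for every `f ∈ C_c^+(ℝ̄₀)` there is `c_f > 0` with `Ψ_N(f‖y) = g(c_f · y)` for all `y > 0`. -/
def ScaleUniqSupp {Ω : Type*} [MeasurableSpace Ω] (μ : Measure Ω) (N : Ω → Measure ℝ)
    (g : ℝ → ℝ) : Prop :=
  ∀ f : ℝ → ℝ, IsCcPos f → ∃ c > 0, ∀ y > 0, SLF μ N f y = g (c * y)

/-- `𝕊_b m`: pushforward of the measure `m` under `x ↦ b·x`. -/
noncomputable def scaleMeasure (b : ℝ) (m : Measure ℝ) : Measure ℝ :=
  Measure.map (fun x => b * x) m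

/-- `N` is strictly `α`-stable: for all `b₁, b₂ > 0`, if `N₁, N₂` are independent copies
of `N` then `𝕊_{b₁}N₁ + 𝕊_{b₂}N₂` has the same distribution as
`𝕊_{(b₁^α+b₂^α)^{1/α}}N`. -/
def IsStAlphaS {Ω : Type*} [MeasurableSpace Ω] (μ : Measure Ω) (N : Ω → Measure ℝ)
    (α : ℝ) : Prop :=
  ∀ b₁ > (0:ℝ), ∀ b₂ > (0:ℝ),
    Measure.map (fun p : Ω × Ω => scaleMeasure b₁ (N p.1) + scaleMeasure b₂ (N p.2))
        (μ.prod μ)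
      = Measure.map (fun ω => scaleMeasure ((b₁ ^ α + b₂ ^ α) ^ (1/α)) (N ω)) μ

/-- The Fréchet distribution function `Φ_α(x) = exp(-x^(-α))`. -/
noncomputable def frechet (α x : ℝ) : ℝ := Real.exp (-(x ^ (-α)))

/-!
For `f ∈ C_c^+(ℝ̄₀)` put `φ(b) = E exp(-∫ f d(𝕊_b N))`, so that `Ψ_N(f‖y) = φ(y⁻¹)`. Since `f`
is bounded and vanishes near `0`, local finiteness makes `φ > 0`, and strict stability together
with the independence of the two copies gives `φ(b₁) φ(b₂) = φ((b₁^α + b₂^α)^(1/α))`. Hence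
`s ↦ -log φ(s^(1/α))` is additive and nonnegative on `(0,∞)`, so it is `c s` for some `c ≥ 0`,
i.e. `Ψ_N(f‖y) = exp(-c y^(-α))`: identically `1` if `c = 0`, and `Φ_α(y c^(-1/α))` otherwise.
-/

lemma expNeg_nonneg (z : ℝ≥0∞) : 0 ≤ expNeg z := by
  unfold expNeg; split_ifs <;> positivity

lemma expNeg_le_one (z : ℝ≥0∞) : expNeg z ≤ 1 := by
  unfold expNeg; split_ifs
  · exact zero_le_one
  · exact Real.exp_le_one_iff.mpr (neg_nonpos.mpr ENNReal.toReal_nonneg)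

lemma expNeg_pos {z : ℝ≥0∞} (hz : z ≠ ∞) : 0 < expNeg z := by
  rw [expNeg, if_neg hz]; exact Real.exp_pos _

lemma expNeg_add (a b : ℝ≥0∞) : expNeg (a + b) = expNeg a * expNeg b := by
  rcases eq_or_ne a ∞ with rfl | ha
  · simp [expNeg]
  rcases eq_or_ne b ∞ with rfl | hb
  · simp [expNeg]
  rw [expNeg, expNeg, expNeg, if_neg (ENNReal.add_ne_top.mpr ⟨ha, hb⟩), if_neg ha, if_neg hb,
    ENNReal.toReal_add ha hb, neg_add, Real.exp_add]

lemma measurable_expNeg : Measurable expNeg :=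
  Measurable.ite (MeasurableSet.singleton ∞) measurable_const ENNReal.measurable_toReal.neg.exp

/-- Nonnegativity makes `L` monotone; comparing `L (n s)` with `L ⌈n s⌉₊` gives
`n |L s - L 1 * s| ≤ L 1` for every `n`. -/
theorem eq_mul_of_add_of_nonneg {L : ℝ → ℝ} (hadd : ∀ s > 0, ∀ t > 0, L (s + t) = L s + L t)
    (hnn : ∀ s > 0, 0 ≤ L s) : ∀ s > 0, L s = L 1 * s := by
  have hmono : ∀ s > 0, ∀ t, s ≤ t → L s ≤ L t := by
    intro s hs t hst
    rcases hst.eq_or_lt with rfl | hlt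
    · rfl
    · have h := hadd s hs (t - s) (by linarith)
      rw [add_sub_cancel] at h
      linarith [hnn (t - s) (by linarith)]
  have hsmul : ∀ n : ℕ, ∀ s > 0, L ((n + 1) * s) = (n + 1) * L s := by
    intro n
    induction n with
    | zero => simp
    | succ n ih =>
      intro s hs
      push_cast
      rw [add_one_mul ((n : ℝ) + 1), hadd _ (by positivity) s hs, ih s hs]
      ring
  intro s hs
  have hL1 : 0 ≤ L 1 := hnn 1 one_pos
  have hbound : ∀ n : ℕ, (n + 1) * |L s - L 1 * s| ≤ L 1 := by
    intro n
    have hns : 0 < ((n : ℝ) + 1) * s := by positivity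
    obtain ⟨k, hk⟩ : ∃ k : ℕ, ⌈((n : ℝ) + 1) * s⌉₊ = k + 1 :=
      Nat.exists_eq_add_one.mpr (Nat.ceil_pos.mpr hns)
    have hceil_ge : ((n : ℝ) + 1) * s ≤ k + 1 := by exact_mod_cast hk ▸ Nat.le_ceil _
    have hceil_lt : ((k : ℝ) + 1) < (n + 1) * s + 1 := by
      exact_mod_cast hk ▸ Nat.ceil_lt_add_one hns.le
    have hLk : L (k + 1) = (k + 1) * L 1 := by simpa using hsmul k 1 one_pos
    have hupper := hmono _ hns _ hceil_ge
    have hlower := hmono _ (by positivity) _ hceil_lt.le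
    rw [hsmul n s hs, hLk] at hupper
    rw [hadd _ hns 1 one_pos, hsmul n s hs, hLk] at hlower
    have h1 := mul_le_mul_of_nonneg_right hceil_ge hL1
    have h2 := mul_le_mul_of_nonneg_right hceil_lt.le hL1
    rw [← abs_of_pos (show (0 : ℝ) < n + 1 by positivity), ← abs_mul, abs_le]
    constructor <;> nlinarith
  by_contra hne
  have hd : 0 < |L s - L 1 * s| := abs_pos.mpr (sub_ne_zero.mpr hne)
  obtain ⟨n, hn⟩ := exists_nat_gt (L 1 / |L s - L 1 * s|)
  have := hbound n
  rw [div_lt_iff₀ hd] at hn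
  nlinarith

theorem exists_eq_exp_neg_mul_rpow_of_mul_eq {φ : ℝ → ℝ} {α : ℝ} (hα : 0 < α)
    (hpos : ∀ b > 0, 0 < φ b) (hle : ∀ b > 0, φ b ≤ 1)
    (hmul : ∀ b₁ > 0, ∀ b₂ > 0, φ b₁ * φ b₂ = φ ((b₁ ^ α + b₂ ^ α) ^ (1 / α))) :
    ∃ c ≥ 0, ∀ b > 0, φ b = Real.exp (-(c * b ^ α)) := by
  set L : ℝ → ℝ := fun s ↦ -Real.log (φ (s ^ (1 / α)))
  have hroot : ∀ s > (0 : ℝ), 0 < s ^ (1 / α) := fun s hs ↦ Real.rpow_pos_of_pos hs _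
  have hadd : ∀ s > 0, ∀ t > 0, L (s + t) = L s + L t := by
    intro s hs t ht
    have h := hmul _ (hroot s hs) _ (hroot t ht)
    rw [one_div, Real.rpow_inv_rpow hs.le hα.ne', Real.rpow_inv_rpow ht.le hα.ne', ← one_div] at h
    simp only [L, ← h, Real.log_mul (hpos _ (hroot s hs)).ne' (hpos _ (hroot t ht)).ne']
    ring
  have hnn : ∀ s > 0, 0 ≤ L s := fun s hs ↦
    neg_nonneg.mpr (Real.log_nonpos (hpos _ (hroot s hs)).le (hle _ (hroot s hs)))
  refine ⟨L 1, hnn 1 one_pos, fun b hb ↦ ?_⟩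
  have hb' : (b ^ α) ^ (1 / α) = b := by rw [one_div, Real.rpow_rpow_inv hb.le hα.ne']
  have h := eq_mul_of_add_of_nonneg hadd hnn (b ^ α) (Real.rpow_pos_of_pos hb _)
  simp only [L, hb'] at h
  rw [← h, neg_neg, Real.exp_log (hpos b hb)]

lemma IsCcPos.exists_le {f : ℝ → ℝ} (hf : IsCcPos f) : ∃ M, ∀ x, f x ≤ M := by
  obtain ⟨hcont, -, -, ⟨L₁, hL₁⟩, ⟨L₂, hL₂⟩⟩ := hf
  obtain ⟨M, hM⟩ := (hcont.isBounded_range_iff_isBigO_atTop_atBot.mpr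
    ⟨hL₁.isBigO_one ℝ, hL₂.isBigO_one ℝ⟩).bddAbove
  exact ⟨M, fun x ↦ hM (mem_range_self x)⟩

lemma lintegral_ofReal_lt_top_of_eq_zero_near_zero {m : Measure ℝ} {g : ℝ → ℝ} {M ε : ℝ}
    (hM : ∀ x, g x ≤ M) (hε : ∀ x, |x| < ε → g x = 0) (hm : m {x | ε ≤ |x|} < ∞) :
    ∫⁻ x, ENNReal.ofReal (g x) ∂m < ∞ := by
  have hmeas : MeasurableSet {x : ℝ | ε ≤ |x|} :=
    measurableSet_le measurable_const continuous_abs.measurable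
  calc ∫⁻ x, ENNReal.ofReal (g x) ∂m
      ≤ ∫⁻ x, {x : ℝ | ε ≤ |x|}.indicator (fun _ ↦ ENNReal.ofReal M) x ∂m := by
        refine lintegral_mono fun x ↦ ?_
        by_cases hx : ε ≤ |x|
        · simpa [indicator_of_mem (show x ∈ {x : ℝ | ε ≤ |x|} from hx)]
            using ENNReal.ofReal_le_ofReal (hM x)
        · simp [hε x (not_le.mp hx)]
    _ = ENNReal.ofReal M * m {x | ε ≤ |x|} := by
        rw [lintegral_indicator hmeas, setLIntegral_const]
    _ < ∞ := ENNReal.mul_lt_top ENNReal.ofReal_lt_top hm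

lemma measurable_scaleMeasure (b : ℝ) : Measurable (scaleMeasure b) :=
  Measure.measurable_map _ (measurable_const_mul b)

lemma lintegral_scaleMeasure {g : ℝ → ℝ≥0∞} (hg : Measurable g) (b : ℝ) (m : Measure ℝ) :
    ∫⁻ x, g x ∂scaleMeasure b m = ∫⁻ x, g (b * x) ∂m :=
  lintegral_map hg (measurable_const_mul b)

section LaplaceFunctional

variable {Ω : Type*} [MeasurableSpace Ω] {μ : Measure Ω} {N : Ω → Measure ℝ} {f : ℝ → ℝ}

noncomputable def laplaceScaled (μ : Measure Ω) (N : Ω → Measure ℝ) (f : ℝ → ℝ) (b : ℝ) : ℝ :=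
  ∫ ω, expNeg (∫⁻ x, ENNReal.ofReal (f x) ∂scaleMeasure b (N ω)) ∂μ

lemma measurable_expNeg_lintegral (hf : Measurable f) :
    Measurable fun m : Measure ℝ ↦ expNeg (∫⁻ x, ENNReal.ofReal (f x) ∂m) :=
  measurable_expNeg.comp (Measure.measurable_lintegral hf.ennreal_ofReal)

lemma SLF_eq_laplaceScaled (hf : Measurable f) (y : ℝ) :
    SLF μ N f y = laplaceScaled μ N f y⁻¹ := by
  simp only [SLF, laplaceScaled, lintegral_scaleMeasure hf.ennreal_ofReal, div_eq_inv_mul]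

lemma laplaceScaled_le_one [IsProbabilityMeasure μ] (b : ℝ) : laplaceScaled μ N f b ≤ 1 := by
  calc laplaceScaled μ N f b ≤ ∫ _, (1 : ℝ) ∂μ :=
        integral_mono_of_nonneg (ae_of_all _ fun _ ↦ expNeg_nonneg _) (integrable_const 1)
          (ae_of_all _ fun _ ↦ expNeg_le_one _)
    _ = 1 := by simp

lemma laplaceScaled_pos [IsProbabilityMeasure μ] (hN : Measurable N) (hf : IsCcPos f)
    (hfin : ∀ᵐ ω ∂μ, ∀ r > 0, N ω {x | r ≤ |x|} < ∞) {b : ℝ} (hb : 0 < b) :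
    0 < laplaceScaled μ N f b := by
  obtain ⟨M, hM⟩ := hf.exists_le
  obtain ⟨ε, hε, hf0⟩ := hf.2.2.1
  set F := fun ω ↦ expNeg (∫⁻ x, ENNReal.ofReal (f x) ∂scaleMeasure b (N ω))
  have hFm : Measurable F :=
    (measurable_expNeg_lintegral hf.1.measurable).comp ((measurable_scaleMeasure b).comp hN)
  have hFpos : ∀ᵐ ω ∂μ, 0 < F ω := by
    filter_upwards [hfin] with ω hω
    refine expNeg_pos (ne_of_lt ?_)
    rw [lintegral_scaleMeasure hf.1.measurable.ennreal_ofReal]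
    refine lintegral_ofReal_lt_top_of_eq_zero_near_zero (fun x ↦ hM _) (fun x hx ↦ hf0 _ ?_)
      (hω _ (div_pos hε hb))
    rwa [abs_mul, abs_of_pos hb, ← lt_div_iff₀' hb]
  have hFint : Integrable F μ := by
    refine Integrable.mono' (integrable_const 1) hFm.aestronglyMeasurable (ae_of_all _ fun ω ↦ ?_)
    rw [Real.norm_of_nonneg (expNeg_nonneg _)]
    exact expNeg_le_one _
  rw [laplaceScaled, integral_pos_iff_support_of_nonneg_ae (ae_of_all _ fun ω ↦ expNeg_nonneg _)
    hFint]
  have hsupp : (univ : Set Ω) ≤ᵐ[μ] Function.support F := by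
    filter_upwards [hFpos] with ω hω _ using hω.ne'
  have h := measure_mono_ae hsupp
  rw [measure_univ] at h
  exact zero_lt_one.trans_le h

lemma laplaceScaled_mul_laplaceScaled [SFinite μ] {α : ℝ} (hN : Measurable N)
    (hf : Measurable f) (hstab : IsStAlphaS μ N α) {b₁ b₂ : ℝ} (hb₁ : 0 < b₁) (hb₂ : 0 < b₂) :
    laplaceScaled μ N f b₁ * laplaceScaled μ N f b₂
      = laplaceScaled μ N f ((b₁ ^ α + b₂ ^ α) ^ (1 / α)) := by
  set F := fun m : Measure ℝ ↦ expNeg (∫⁻ x, ENNReal.ofReal (f x) ∂m)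
  have hF : Measurable F := measurable_expNeg_lintegral hf
  have hsum : Measurable fun p : Ω × Ω ↦ scaleMeasure b₁ (N p.1) + scaleMeasure b₂ (N p.2) :=
    ((measurable_scaleMeasure b₁).comp (hN.comp measurable_fst)).add
      ((measurable_scaleMeasure b₂).comp (hN.comp measurable_snd))
  calc laplaceScaled μ N f b₁ * laplaceScaled μ N f b₂
      = ∫ p, F (scaleMeasure b₁ (N p.1) + scaleMeasure b₂ (N p.2)) ∂μ.prod μ := by
        rw [laplaceScaled, laplaceScaled, ← integral_prod_mul]
        simp only [F, lintegral_add_measure, expNeg_add]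
    _ = ∫ m, F m ∂(μ.prod μ).map
          fun p ↦ scaleMeasure b₁ (N p.1) + scaleMeasure b₂ (N p.2) :=
        (integral_map hsum.aemeasurable hF.aestronglyMeasurable).symm
    _ = ∫ m, F m ∂μ.map fun ω ↦ scaleMeasure ((b₁ ^ α + b₂ ^ α) ^ (1 / α)) (N ω) := by
        rw [hstab b₁ hb₁ b₂ hb₂]
    _ = _ := integral_map ((measurable_scaleMeasure _).comp hN).aemeasurable
          hF.aestronglyMeasurable

theorem exists_SLF_eq_exp_neg_mul_rpow_neg [IsProbabilityMeasure μ] {α : ℝ} (hα : 0 < α)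
    (hN : Measurable N) (hfin : ∀ᵐ ω ∂μ, ∀ r : ℝ, 0 < r → N ω {x | r ≤ |x|} < ∞)
    (hstab : IsStAlphaS μ N α) (hf : IsCcPos f) :
    ∃ c ≥ 0, ∀ y > 0, SLF μ N f y = Real.exp (-(c * y ^ (-α))) := by
  obtain ⟨c, hc, hlaplace⟩ := exists_eq_exp_neg_mul_rpow_of_mul_eq hα
    (fun b hb ↦ laplaceScaled_pos hN hf hfin hb) (fun b _ ↦ laplaceScaled_le_one b)
    (fun b₁ hb₁ b₂ hb₂ ↦ laplaceScaled_mul_laplaceScaled hN hf.1.measurable hstab hb₁ hb₂)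
  refine ⟨c, hc, fun y hy ↦ ?_⟩
  rw [SLF_eq_laplaceScaled hf.1.measurable, hlaplace _ (inv_pos.mpr hy), Real.inv_rpow hy.le,
    Real.rpow_neg hy.le]

end LaplaceFunctional

lemma exp_neg_mul_rpow_neg_eq_frechet {α c y : ℝ} (hα : 0 < α) (hc : 0 < c) (hy : 0 < y) :
    Real.exp (-(c * y ^ (-α))) = frechet α (y * c ^ (-(1 / α))) := by
  rw [frechet, Real.mul_rpow hy.le (Real.rpow_nonneg hc.le _), ← Real.rpow_mul hc.le,
    show -(1 / α) * -α = 1 by field_simp, Real.rpow_one, mul_comm]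

theorem stmt1_general {Ω : Type*} [MeasurableSpace Ω] (μ : Measure Ω) [IsProbabilityMeasure μ]
    (N : Ω → Measure ℝ) (hN : IsPointProcess μ N)
    (α : ℝ) (hα : 0 < α) (hstas : IsStAlphaS μ N α) :
    (∀ f : ℝ → ℝ, IsCcPos f →
      (∀ y > 0, SLF μ N f y = 1) ∨ (∃ c > 0, ∀ y > 0, SLF μ N f y = frechet α (y * c))) ∧
    ((∀ f : ℝ → ℝ, IsCcPos f → ∃ y₀ > 0, SLF μ N f y₀ < 1) →
      ScaleUniqSupp μ N (frechet α)) := by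
  obtain ⟨hNm, -, hNfin, -⟩ := hN
  have hdichotomy : ∀ f : ℝ → ℝ, IsCcPos f →
      (∀ y > 0, SLF μ N f y = 1) ∨ (∃ c > 0, ∀ y > 0, SLF μ N f y = frechet α (y * c)) := by
    intro f hf
    obtain ⟨c, hc, hSLF⟩ := exists_SLF_eq_exp_neg_mul_rpow_neg hα hNm hNfin hstas hf
    rcases hc.eq_or_lt with rfl | hc
    · exact Or.inl fun y hy ↦ by simp [hSLF y hy]
    · exact Or.inr ⟨c ^ (-(1 / α)), Real.rpow_pos_of_pos hc _,
        fun y hy ↦ (hSLF y hy).trans (exp_neg_mul_rpow_neg_eq_frechet hα hc hy)⟩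
  refine ⟨hdichotomy, fun hnondeg f hf ↦ ?_⟩
  obtain ⟨y₀, hy₀, hlt⟩ := hnondeg f hf
  obtain hone | ⟨c, hc, hfrechet⟩ := hdichotomy f hf
  · exact absurd (hone y₀ hy₀) hlt.ne
  · exact ⟨c, hc, fun y hy ↦ by rw [hfrechet y hy, mul_comm]⟩

/-- if `N` is a strictly `α`-stable locally finite point process on `ℝ̄₀` with
`P(N(ℝ̄₀)>0) > 0`, then for every `f ∈ C_c^+(ℝ̄₀)` either `Ψ_N(f‖·) ≡ 1` on `(0,∞)` or
`Ψ_N(f‖y) = Φ_α(y·c_f)` for some `c_f > 0`; in particular if the degenerate case never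
occurs then the scaled Laplace functional of `N` is scale-uniquely supported on `[Φ_α]_sc`. -/
theorem stmt1 {Ω : Type*} [MeasurableSpace Ω] (μ : Measure Ω) [IsProbabilityMeasure μ]
    (N : Ω → Measure ℝ) (hN : IsPointProcess μ N)
    (hpos : 0 < μ {ω | 0 < N ω Set.univ})
    (α : ℝ) (hα : 0 < α) (hstas : IsStAlphaS μ N α) :
    (∀ f : ℝ → ℝ, IsCcPos f →
      (∀ y > 0, SLF μ N f y = 1) ∨ (∃ c > 0, ∀ y > 0, SLF μ N f y = frechet α (y * c))) ∧
    ((∀ f : ℝ → ℝ, IsCcPos f → ∃ y₀ > 0, SLF μ N f y₀ < 1) →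
      ScaleUniqSupp μ N (frechet α)) :=
  stmt1_general μ N hN α hα hstas
end

section
/- Let N be a locally finite point process on ℝ̄₀. Then for every f ∈ C_c^+(ℝ̄₀), the map y ↦ Ψ_N(f‖y) is continuous on (0,∞). Consequently, if the scaled Laplace functional of N is scale-uniquely supported on [g]_sc, then g is continuous on (0,∞). -/
open MeasureTheory Filter Set
open scoped ENNReal Topology

lemma continuous_expNeg : Continuous expNeg := by
  rw [continuous_iff_continuousAt]
  intro a
  by_cases ha : a = ∞
  · subst ha
    rw [ContinuousAt]
    rw [Metric.tendsto_nhds]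
    intro ε hε
    obtain ⟨n, hn⟩ : ∃ n : ℕ, Real.exp (-(n:ℝ)) < ε := by
      have := Real.tendsto_exp_atBot
      have h2 : Tendsto (fun n : ℕ => Real.exp (-(n:ℝ))) atTop (𝓝 0) :=
        this.comp (tendsto_neg_atBot_iff.2 tendsto_natCast_atTop_atTop)
      rcases (h2.eventually (eventually_lt_nhds hε)).exists with ⟨n, hn⟩
      exact ⟨n, hn⟩
    filter_upwards [eventually_gt_nhds (show ((n:ℝ≥0∞)) < ∞ by simp [ENNReal.natCast_lt_top])] with z hz
    have h0 : |expNeg z| = expNeg z := abs_of_nonneg (expNeg_nonneg z)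
    have hTop : expNeg ⊤ = 0 := by simp [expNeg]
    rw [hTop, dist_zero_right, Real.norm_eq_abs, h0]
    by_cases hz' : z = ∞
    · simpa [expNeg, hz'] using hε
    · have hle : (n:ℝ) ≤ z.toReal := by
        have h3 := (ENNReal.toReal_le_toReal (a := (n:ℝ≥0∞)) (by simp) hz').2 hz.le
        simpa using h3
      calc expNeg z = Real.exp (-z.toReal) := by simp [expNeg, hz']
        _ ≤ Real.exp (-(n:ℝ)) := Real.exp_le_exp.2 (by linarith)
        _ < ε := hn
  · have h1 : ∀ᶠ z in 𝓝 a, expNeg z = Real.exp (-z.toReal) := by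
      filter_upwards [eventually_lt_nhds (lt_top_iff_ne_top.2 ha)] with z hz
      simp [expNeg, hz.ne]
    have h2 : Tendsto (fun z : ℝ≥0∞ => Real.exp (-z.toReal)) (𝓝 a) (𝓝 (Real.exp (-a.toReal))) :=
      Real.continuous_exp.continuousAt.tendsto.comp ((ENNReal.tendsto_toReal ha).neg)
    rw [ContinuousAt]
    have : expNeg a = Real.exp (-a.toReal) := by simp [expNeg, ha]
    rw [this]
    exact h2.congr' (h1.mono fun z hz => hz.symm)

/-- A function in `C_c^+` is bounded above. -/
lemma IsCcPos.bddAbove {f : ℝ → ℝ} (hf : IsCcPos f) : ∃ M : ℝ, 0 ≤ M ∧ ∀ x, f x ≤ M := by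
  obtain ⟨hc, hpos, -, ⟨L1, hT⟩, ⟨L2, hB⟩⟩ := hf
  obtain ⟨A, hA⟩ := (hT.eventually (eventually_lt_nhds (lt_add_one L1))).exists_forall_of_atTop
  obtain ⟨B, hB'⟩ := (hB.eventually (eventually_lt_nhds (lt_add_one L2))).exists_forall_of_atBot
  obtain ⟨C, hC⟩ := (isCompact_Icc (a := B) (b := A)).exists_bound_of_continuousOn hc.continuousOn
  refine ⟨max 0 (max C (max (L1 + 1) (L2 + 1))), le_max_left _ _, fun x => ?_⟩
  rcases le_total A x with h | h
  · exact le_trans (hA x h).le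
      (le_max_of_le_right (le_max_of_le_right (le_max_left _ _)))
  rcases le_total x B with h' | h'
  · exact le_trans (hB' x h').le
      (le_max_of_le_right (le_max_of_le_right (le_max_right _ _)))
  · have := hC x ⟨h', h⟩
    rw [Real.norm_eq_abs, abs_of_nonneg (hpos x)] at this
    exact le_trans this (le_max_of_le_right (le_max_left _ _))

lemma inner_tendsto {f : ℝ → ℝ} (hc : Continuous f)
    {ε : ℝ} (hε : 0 < ε) (hzero : ∀ x : ℝ, |x| < ε → f x = 0)
    {M : ℝ} (hM : ∀ x, f x ≤ M) (ν : Measure ℝ)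
    (hν : ∀ b : ℝ, 0 < b → ν {x : ℝ | b ≤ |x|} < ∞)
    {y₀ : ℝ} (hy₀ : 0 < y₀) :
    Tendsto (fun y => ∫⁻ x, ENNReal.ofReal (f (x / y)) ∂ν) (𝓝[Set.Ioi 0] y₀)
      (𝓝 (∫⁻ x, ENNReal.ofReal (f (x / y₀)) ∂ν)) := by
  set s : Set ℝ := {x : ℝ | ε * y₀ / 2 ≤ |x|} with hs_def
  have hs_meas : MeasurableSet s := by
    have : s = (fun x : ℝ => |x|) ⁻¹' Set.Ici (ε * y₀ / 2) := rfl
    rw [this]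
    exact (continuous_abs.measurable) measurableSet_Ici
  refine tendsto_lintegral_filter_of_dominated_convergence
      (s.indicator fun _ => ENNReal.ofReal M) ?_ ?_ ?_ ?_
  · exact Eventually.of_forall fun y =>
      ENNReal.measurable_ofReal.comp (hc.measurable.comp (measurable_id.div_const y))
  · have hmem : Set.Ioi (y₀ / 2) ∈ 𝓝[Set.Ioi 0] y₀ :=
      nhdsWithin_le_nhds (isOpen_Ioi.mem_nhds (Set.mem_Ioi.2 (by linarith)))
    filter_upwards [hmem] with y hy
    rw [Set.mem_Ioi] at hy
    refine ae_of_all _ fun x => ?_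
    by_cases hx : x ∈ s
    · rw [Set.indicator_of_mem hx]
      exact ENNReal.ofReal_le_ofReal (hM _)
    · rw [Set.indicator_of_notMem hx]
      have hx' : |x| < ε * y₀ / 2 := by
        simp only [hs_def, Set.mem_setOf_eq, not_le] at hx; exact hx
      have hy2 : (0:ℝ) < y := lt_trans (by linarith) hy
      have : |x / y| < ε := by
        rw [abs_div, abs_of_pos hy2, div_lt_iff₀ hy2]
        have := mul_lt_mul_of_pos_left hy hε
        linarith
      simp [hzero _ this]
  · rw [lintegral_indicator hs_meas, setLIntegral_const]
    exact ENNReal.mul_ne_top ENNReal.ofReal_ne_top (hν _ (by positivity)).ne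
  · refine ae_of_all _ fun x => ?_
    have h1 : Tendsto (fun y : ℝ => x / y) (𝓝 y₀) (𝓝 (x / y₀)) :=
      tendsto_const_nhds.div tendsto_id hy₀.ne'
    exact (((ENNReal.continuous_ofReal.tendsto _).comp ((hc.tendsto _).comp h1)).mono_left
      nhdsWithin_le_nhds)

/-- for a locally finite point process `N` on `ℝ̄₀`, the map `y ↦ Ψ_N(f‖y)` is
continuous on `(0,∞)` for every `f ∈ C_c^+(ℝ̄₀)`; consequently, if the scaled Laplace
functional of `N` is scale-uniquely supported on `[g]_sc` then `g` is continuous on `(0,∞)`. -/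
theorem stmt4 {Ω : Type*} [MeasurableSpace Ω] (μ : Measure Ω) [IsProbabilityMeasure μ]
    (N : Ω → Measure ℝ) (hN : IsPointProcess μ N) :
    (∀ f : ℝ → ℝ, IsCcPos f → ContinuousOn (fun y => SLF μ N f y) (Set.Ioi 0)) ∧
    (∀ g : ℝ → ℝ, ScaleUniqSupp μ N g → ContinuousOn g (Set.Ioi 0)) := by
  have part1 : ∀ f : ℝ → ℝ, IsCcPos f → ContinuousOn (fun y => SLF μ N f y) (Set.Ioi 0) := by
    intro f hf
    obtain ⟨M, hM0, hM⟩ := hf.bddAbove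
    obtain ⟨hc, hpos, ⟨ε, hε, hzero⟩, -, -⟩ := hf
    intro y₀ hy₀
    rw [Set.mem_Ioi] at hy₀
    rw [ContinuousWithinAt]
    simp only [SLF]
    refine tendsto_integral_filter_of_dominated_convergence (fun _ => (1:ℝ)) ?_ ?_
      (integrable_const 1) ?_
    · refine Eventually.of_forall fun y => ?_
      have hmeas : Measurable fun x : ℝ => ENNReal.ofReal (f (x / y)) :=
        ENNReal.measurable_ofReal.comp (hc.measurable.comp (measurable_id.div_const y))
      exact (continuous_expNeg.measurable.comp
        ((Measure.measurable_lintegral hmeas).comp hN.1)).aestronglyMeasurable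
    · refine Eventually.of_forall fun y => ae_of_all _ fun ω => ?_
      rw [Real.norm_eq_abs, abs_of_nonneg (expNeg_nonneg _)]
      exact expNeg_le_one _
    · filter_upwards [hN.2.2.1] with ω hω
      exact (continuous_expNeg.tendsto _).comp
        (inner_tendsto hc hε hzero hM (N ω) hω hy₀)
  refine ⟨part1, fun g hg => ?_⟩
  set f₀ : ℝ → ℝ := fun x => min 1 (max 0 (|x| - 1)) with hf₀_def
  have hf₀ : IsCcPos f₀ := by
    refine ⟨continuous_const.min (continuous_const.max (continuous_abs.sub continuous_const)),
      fun x => le_min zero_le_one (le_max_left _ _), ⟨1, one_pos, fun x hx => ?_⟩,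
      ⟨1, ?_⟩, ⟨1, ?_⟩⟩
    · have : max 0 (|x| - 1) = 0 := max_eq_left (by linarith)
      simp [hf₀_def, this]
    · refine tendsto_const_nhds.congr' ?_
      filter_upwards [eventually_ge_atTop (2:ℝ)] with x hx
      have hx2 : (1:ℝ) ≤ |x| - 1 := by
        rw [abs_of_nonneg (by linarith)]; linarith
      simp [hf₀_def, max_eq_right (by linarith : (0:ℝ) ≤ |x| - 1), min_eq_left hx2]
    · refine tendsto_const_nhds.congr' ?_
      filter_upwards [eventually_le_atBot (-2:ℝ)] with x hx
      have hx2 : (1:ℝ) ≤ |x| - 1 := by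
        rw [abs_of_nonpos (by linarith)]; linarith
      simp [hf₀_def, max_eq_right (by linarith : (0:ℝ) ≤ |x| - 1), min_eq_left hx2]
  obtain ⟨c, hc0, hgc⟩ := hg f₀ hf₀
  have h1 : ContinuousOn (fun t => SLF μ N f₀ (t / c)) (Set.Ioi 0) := by
    refine (part1 f₀ hf₀).comp ((continuous_id.div_const c).continuousOn) ?_
    intro t ht
    exact Set.mem_Ioi.2 (div_pos (Set.mem_Ioi.1 ht) hc0)
  refine h1.congr fun t ht => ?_
  have ht' : (0:ℝ) < t := Set.mem_Ioi.1 ht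
  have := hgc (t / c) (div_pos ht' hc0)
  rw [mul_div_cancel₀ _ hc0.ne'] at this
  exact this.symm
end

section
/- Let N be a locally finite point process on ℝ̄₀ with P(N(ℝ̄₀) = 0) = 0 and E[N(ℝ̄₀∖(−a,a))] < ∞ for some a > 0, and suppose the scaled Laplace functional of N is scale-uniquely supported on [g]_sc for some g : (0,∞) → (0,∞). Then inf_{y>0} g(y) = 0, sup_{y>0} g(y) = 1, and 0 < g(x) < 1 for every x ∈ (0,∞); in particular g attains neither its infimum nor its supremum. -/
open MeasureTheory Filter Set
open scoped ENNReal Topology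

/-!
Testing against the ramp `f₀` (`0` on `|u| ≤ 1/2`, `1` on `|u| ≥ 1`) gives
`g x = Ψ_N(f₀‖x/c)`, so `g` is nondecreasing and at most `1`. Since counts are integers,
`Ψ_N(n f₀‖y) ≤ e⁻ⁿ + P(N{|x| ≥ y} = 0)`, which is small for large `n` and small `y` because
`N ≠ 0` a.s.; and `Ψ_N(f₀‖2t) ≥ P(N{|x| ≥ t} = 0) → 1` by local finiteness. Hence `inf g = 0`
and `sup g = 1`.

If `g = 1` somewhere, the level set `S = {g = 1}` is a half-line with positive infimum. As
`Ψ_N(f‖y) = 1` iff `∫ f(x/y) N(dx) = 0` a.s., the test function `f₂(u) = f₀(u) + f₀(2u)` has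
`c_{f₂} y ∈ S ↔ c_{f₀} y/2 ∈ S`, which forces `c_{f₂} = c_{f₀}/2`. Then
`E[exp(-A(y) - A(y/2))] = E[exp(-A(y/2))]` with `A(y) = ∫ f₀(x/y) N(dx)` and `A(y/2) < ∞`, so
`A(y) = 0` a.s., i.e. `g ≡ 1`, contradicting `inf g = 0`.
-/

@[simp] lemma expNeg_zero : expNeg 0 = 1 := by simp [expNeg]

@[simp] lemma expNeg_top : expNeg ∞ = 0 := by simp [expNeg]

lemma expNeg_natCast (n : ℕ) : expNeg n = Real.exp (-n) := by simp [expNeg]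

lemma expNeg_antitone : Antitone expNeg := by
  intro z w h
  rcases eq_or_ne w ∞ with rfl | hw
  · rw [expNeg_top]; exact expNeg_nonneg z
  · have hz : z ≠ ∞ := ne_top_of_le_ne_top hw h
    simp only [expNeg, hw, hz, if_false]
    exact Real.exp_le_exp.2 (neg_le_neg (ENNReal.toReal_mono hw h))

lemma eq_zero_of_expNeg_add_eq {a b : ℝ≥0∞} (hb : b ≠ ∞) (h : expNeg (a + b) = expNeg b) :
    a = 0 := by
  rcases eq_or_ne a ∞ with rfl | ha
  · simp [expNeg, hb, (Real.exp_pos _).ne] at h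
  · rw [expNeg, if_neg (ENNReal.add_ne_top.2 ⟨ha, hb⟩), expNeg, if_neg hb, Real.exp_eq_exp,
      ENNReal.toReal_add ha hb] at h
    exact ((ENNReal.toReal_eq_zero_iff a).1 (by linarith)).resolve_right ha

section Integral

variable {Ω : Type*} [MeasurableSpace Ω] {μ : Measure Ω} {X Y : Ω → ℝ≥0∞}

lemma integrable_expNeg [IsFiniteMeasure μ] (hX : Measurable X) :
    Integrable (fun ω => expNeg (X ω)) μ :=
  Integrable.of_bound (measurable_expNeg.comp hX).aestronglyMeasurable 1
    (ae_of_all _ fun ω => by rw [Real.norm_of_nonneg (expNeg_nonneg _)]; exact expNeg_le_one _)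

lemma integral_expNeg_le_one [IsProbabilityMeasure μ] (hX : Measurable X) :
    ∫ ω, expNeg (X ω) ∂μ ≤ 1 :=
  (integral_mono (integrable_expNeg hX) (integrable_const 1) fun ω => expNeg_le_one _).trans_eq
    (by simp)

lemma ae_eq_zero_of_integral_expNeg_add_eq [IsFiniteMeasure μ] (hX : Measurable X)
    (hY : Measurable Y) (hYfin : ∀ᵐ ω ∂μ, Y ω ≠ ∞)
    (h : ∫ ω, expNeg (X ω + Y ω) ∂μ = ∫ ω, expNeg (Y ω) ∂μ) :
    ∀ᵐ ω ∂μ, X ω = 0 := by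
  have hae := (integral_eq_iff_of_ae_le (f := fun ω => expNeg (X ω + Y ω))
    (integrable_expNeg (hX.add hY)) (integrable_expNeg hY)
    (ae_of_all _ fun ω => expNeg_antitone le_add_self)).1 h
  filter_upwards [hae, hYfin] with ω hω hfin
  exact eq_zero_of_expNeg_add_eq hfin hω

lemma integral_expNeg_eq_one_iff [IsProbabilityMeasure μ] (hX : Measurable X) :
    ∫ ω, expNeg (X ω) ∂μ = 1 ↔ ∀ᵐ ω ∂μ, X ω = 0 := by
  refine ⟨fun h => ?_, fun h => ?_⟩
  · refine ae_eq_zero_of_integral_expNeg_add_eq hX measurable_const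
      (ae_of_all _ fun _ => ENNReal.zero_ne_top) ?_
    simpa using h
  · rw [integral_congr_ae (g := fun _ => 1) (h.mono fun ω hω => by simp only [hω, expNeg_zero])]
    simp

end Integral

lemma one_le_of_mem_range_natCast_union_top {z : ℝ≥0∞}
    (hz : z ∈ range ((↑) : ℕ → ℝ≥0∞) ∪ {∞}) (h0 : z ≠ 0) : 1 ≤ z := by
  rcases hz with ⟨k, rfl⟩ | rfl
  · exact Nat.one_le_cast.2 (Nat.one_le_iff_ne_zero.2 (by rintro rfl; exact h0 Nat.cast_zero))
  · exact le_top

def tailSet (t : ℝ) : Set ℝ := {x | t ≤ |x|}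

lemma measurableSet_tailSet (t : ℝ) : MeasurableSet (tailSet t) :=
  measurableSet_le measurable_const measurable_id.abs

lemma tailSet_antitone : Antitone tailSet := fun _ _ h _ hx => h.trans hx

section TailSet

variable (ν : Measure ℝ)

lemma measure_univ_eq_zero_of_tailSet (h0 : ν {0} = 0)
    (h : ∀ n : ℕ, ν (tailSet (1 / (n + 1))) = 0) : ν univ = 0 := by
  refine measure_mono_null (fun x _ => ?_) (measure_union_null h0 (measure_iUnion_null h))
  rcases eq_or_ne x 0 with rfl | hx
  · exact Or.inl rfl
  · obtain ⟨n, hn⟩ := exists_nat_one_div_lt (abs_pos.2 hx)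
    exact Or.inr (mem_iUnion.2 ⟨n, hn.le⟩)

lemma exists_measure_tailSet_eq_zero (hfin : ∀ b > 0, ν (tailSet b) < ∞)
    (hint : ∀ B, MeasurableSet B → ν B ∈ range ((↑) : ℕ → ℝ≥0∞) ∪ {∞}) :
    ∃ n : ℕ, ν (tailSet (n + 1)) = 0 := by
  have hempty : ⋂ n : ℕ, tailSet (n + 1) = ∅ :=
    eq_empty_of_forall_notMem fun x hx => by
      obtain ⟨n, hn⟩ := exists_nat_gt |x|
      have hxn : (n : ℝ) + 1 ≤ |x| := mem_iInter.1 hx n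
      linarith
  have hlim := tendsto_measure_iInter_atTop (μ := ν) (s := fun n : ℕ => tailSet (n + 1))
    (fun n => (measurableSet_tailSet _).nullMeasurableSet)
    (fun m n hmn => tailSet_antitone (by gcongr)) ⟨0, (hfin _ (by positivity)).ne⟩
  rw [hempty, measure_empty] at hlim
  obtain ⟨n, hn⟩ := (hlim.eventually_lt_const zero_lt_one).exists
  exact ⟨n, by_contra fun h => (one_le_of_mem_range_natCast_union_top
    (hint _ (measurableSet_tailSet _)) h).not_gt hn⟩

end TailSet

noncomputable def ramp (u : ℝ) : ℝ := min 1 (max (2 * |u| - 1) 0)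

lemma ramp_nonneg (u : ℝ) : 0 ≤ ramp u := le_min zero_le_one (le_max_right _ _)

lemma ramp_le_one (u : ℝ) : ramp u ≤ 1 := min_le_left _ _

lemma ramp_eq_one {u : ℝ} (h : 1 ≤ |u|) : ramp u = 1 :=
  min_eq_left (le_max_of_le_left (by linarith))

lemma ramp_eq_zero {u : ℝ} (h : |u| ≤ 1 / 2) : ramp u = 0 := by
  rw [ramp, max_eq_right (by linarith), min_eq_right zero_le_one]

lemma ramp_le_ramp {u v : ℝ} (h : |u| ≤ |v|) : ramp u ≤ ramp v :=
  min_le_min le_rfl (max_le_max (by linarith) le_rfl)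

lemma continuous_ramp : Continuous ramp := by unfold ramp; fun_prop

lemma measurable_ramp : Measurable ramp := continuous_ramp.measurable

section IsCcPos

variable {f g : ℝ → ℝ}

lemma IsCcPos.const_mul (hf : IsCcPos f) {c : ℝ} (hc : 0 ≤ c) : IsCcPos fun u => c * f u := by
  obtain ⟨hcont, hnonneg, ⟨ε, hε, hzero⟩, ⟨L, hL⟩, ⟨L', hL'⟩⟩ := hf
  exact ⟨continuous_const.mul hcont, fun x => mul_nonneg hc (hnonneg x),
    ⟨ε, hε, fun x hx => by simp only [hzero x hx, mul_zero]⟩, ⟨c * L, hL.const_mul c⟩,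
    ⟨c * L', hL'.const_mul c⟩⟩

lemma IsCcPos.add (hf : IsCcPos f) (hg : IsCcPos g) : IsCcPos fun u => f u + g u := by
  obtain ⟨hcont, hnonneg, ⟨ε, hε, hzero⟩, ⟨L, hL⟩, ⟨L', hL'⟩⟩ := hf
  obtain ⟨gcont, gnonneg, ⟨δ, hδ, gzero⟩, ⟨M, hM⟩, ⟨M', hM'⟩⟩ := hg
  refine ⟨hcont.add gcont, fun x => add_nonneg (hnonneg x) (gnonneg x),
    ⟨min ε δ, lt_min hε hδ, fun x hx => ?_⟩, ⟨L + M, hL.add hM⟩,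
    ⟨L' + M', hL'.add hM'⟩⟩
  simp only [hzero x (hx.trans_le (min_le_left _ _)), gzero x (hx.trans_le (min_le_right _ _)),
    add_zero]

lemma IsCcPos.comp_const_mul (hf : IsCcPos f) {a : ℝ} (ha : 0 < a) :
    IsCcPos fun u => f (a * u) := by
  obtain ⟨hcont, hnonneg, ⟨ε, hε, hzero⟩, ⟨L, hL⟩, ⟨L', hL'⟩⟩ := hf
  refine ⟨hcont.comp (continuous_const.mul continuous_id), fun x => hnonneg _,
    ⟨ε / a, div_pos hε ha, fun x hx => hzero _ ?_⟩,
    ⟨L, hL.comp (tendsto_id.const_mul_atTop ha)⟩,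
    ⟨L', hL'.comp (tendsto_id.const_mul_atBot ha)⟩⟩
  rwa [abs_mul, abs_of_pos ha, ← lt_div_iff₀' ha]

end IsCcPos

lemma isCcPos_ramp : IsCcPos ramp := by
  refine ⟨continuous_ramp, ramp_nonneg, ⟨1 / 2, by norm_num, fun x hx => ramp_eq_zero hx.le⟩,
    ⟨1, tendsto_const_nhds.congr' ?_⟩, ⟨1, tendsto_const_nhds.congr' ?_⟩⟩
  · filter_upwards [eventually_ge_atTop 1] with u hu
    exact (ramp_eq_one (hu.trans (le_abs_self u))).symm
  · filter_upwards [eventually_le_atBot (-1)] with u hu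
    exact (ramp_eq_one (by rw [abs_of_neg (by linarith)]; linarith)).symm

/-- `SLF μ N f y` is definitionally `∫ ω, expNeg (scaledIntegral (N ω) f y) ∂μ`. -/
noncomputable def scaledIntegral (ν : Measure ℝ) (f : ℝ → ℝ) (y : ℝ) : ℝ≥0∞ :=
  ∫⁻ x, ENNReal.ofReal (f (x / y)) ∂ν

section ScaledIntegral

variable (ν : Measure ℝ) {f : ℝ → ℝ} {y : ℝ}

lemma scaledIntegral_natCast_mul (n : ℕ) (f : ℝ → ℝ) (y : ℝ) :
    scaledIntegral ν (fun u => n * f u) y = n * scaledIntegral ν f y := by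
  simp only [scaledIntegral, ENNReal.ofReal_mul (Nat.cast_nonneg n), ENNReal.ofReal_natCast]
  exact lintegral_const_mul' _ _ (ENNReal.natCast_ne_top n)

lemma scaledIntegral_add_comp_two_mul (hf : Measurable f) (hf0 : ∀ u, 0 ≤ f u) (y : ℝ) :
    scaledIntegral ν (fun u => f u + f (2 * u)) y =
      scaledIntegral ν f y + scaledIntegral ν f (y / 2) := by
  simp only [scaledIntegral, ENNReal.ofReal_add (hf0 _) (hf0 _),
    show ∀ x, 2 * (x / y) = x / (y / 2) from fun x => by ring]
  exact lintegral_add_left (hf.comp (measurable_id.div_const y)).ennreal_ofReal _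

lemma measure_tailSet_le_scaledIntegral_ramp (hy : 0 < y) :
    ν (tailSet y) ≤ scaledIntegral ν ramp y := by
  rw [← lintegral_indicator_one (measurableSet_tailSet y)]
  refine lintegral_mono fun x => ?_
  by_cases hx : x ∈ tailSet y
  · have hxy : 1 ≤ |x / y| := by rwa [abs_div, abs_of_pos hy, one_le_div hy]
    rw [indicator_of_mem hx, ramp_eq_one hxy, ENNReal.ofReal_one]
    exact le_rfl
  · rw [indicator_of_notMem hx]
    exact zero_le

lemma scaledIntegral_ramp_le_measure_tailSet (hy : 0 < y) :
    scaledIntegral ν ramp y ≤ ν (tailSet (y / 2)) := by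
  rw [← lintegral_indicator_one (measurableSet_tailSet _)]
  refine lintegral_mono fun x => ?_
  by_cases hx : x ∈ tailSet (y / 2)
  · rw [indicator_of_mem hx]
    exact ENNReal.ofReal_le_one.2 (ramp_le_one _)
  · rw [ramp_eq_zero, ENNReal.ofReal_zero]
    · exact zero_le
    · rw [abs_div, abs_of_pos hy, div_le_iff₀ hy]
      exact (not_le.1 hx).le.trans_eq (by ring)

lemma scaledIntegral_ramp_antitoneOn : AntitoneOn (scaledIntegral ν ramp) (Ioi 0) := by
  intro y hy y' _ hyy'
  refine lintegral_mono fun x => ENNReal.ofReal_le_ofReal (ramp_le_ramp ?_)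
  simp only [abs_div, abs_of_pos (lt_of_lt_of_le hy hyy'), abs_of_pos (show (0 : ℝ) < y from hy)]
  exact div_le_div_of_nonneg_left (abs_nonneg x) hy hyy'

lemma expNeg_scaledIntegral_natCast_mul_ramp_le (hy : 0 < y) (n : ℕ)
    (hnat : ν (tailSet y) ∈ range ((↑) : ℕ → ℝ≥0∞) ∪ {∞}) (h0 : ν (tailSet y) ≠ 0) :
    expNeg (scaledIntegral ν (fun u => n * ramp u) y) ≤ Real.exp (-n) := by
  have hn : (n : ℝ≥0∞) ≤ scaledIntegral ν (fun u => n * ramp u) y := by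
    rw [scaledIntegral_natCast_mul]
    calc (n : ℝ≥0∞) = n * 1 := (mul_one _).symm
      _ ≤ n * ν (tailSet y) := by
        gcongr; exact one_le_of_mem_range_natCast_union_top hnat h0
      _ ≤ n * scaledIntegral ν ramp y := by
        gcongr; exact measure_tailSet_le_scaledIntegral_ramp _ hy
  exact (expNeg_antitone hn).trans_eq (expNeg_natCast n)

lemma measurable_scaledIntegral {Ω : Type*} [MeasurableSpace Ω] {N : Ω → Measure ℝ}
    (hN : Measurable N) (hf : Measurable f) (y : ℝ) :
    Measurable fun ω => scaledIntegral (N ω) f y :=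
  (Measure.measurable_lintegral (hf.comp (measurable_id.div_const y)).ennreal_ofReal).comp hN

end ScaledIntegral

lemma le_of_forall_mul_mem_imp {S : Set ℝ} {t : ℝ} (ht : 0 < t) (hS : ∀ s ∈ S, t ≤ s)
    (hne : S.Nonempty) {a b : ℝ} (ha : 0 < a) (hb : 0 < b)
    (h : ∀ y > 0, b * y ∈ S → a * y ∈ S) : b ≤ a := by
  by_contra! hab
  have hT : 0 < sInf S := ht.trans_le (le_csInf hne hS)
  obtain ⟨s, hsS, hs⟩ := exists_lt_of_csInf_lt hne
    (lt_mul_of_one_lt_left hT ((one_lt_div ha).2 hab) : sInf S < b / a * sInf S)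
  have hs0 : 0 < s := ht.trans_le (hS s hsS)
  have hmem : a * (s / b) ∈ S := h _ (div_pos hs0 hb) (by rwa [mul_div_cancel₀ s hb.ne'])
  have hlt : a * (s / b) < sInf S := by
    rw [div_mul_eq_mul_div, lt_div_iff₀ ha] at hs
    rw [mul_div_assoc', div_lt_iff₀ hb]
    linarith
  exact hlt.not_ge (csInf_le ⟨t, hS⟩ hmem)

section LaplaceFunctional

variable {Ω : Type*} [MeasurableSpace Ω] {μ : Measure Ω} {N : Ω → Measure ℝ} {f : ℝ → ℝ}
  {y : ℝ}

lemma SLF_le_one [IsProbabilityMeasure μ] (hN : Measurable N) (hf : Measurable f) (y : ℝ) :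
    SLF μ N f y ≤ 1 :=
  integral_expNeg_le_one (measurable_scaledIntegral hN hf y)

lemma SLF_eq_one_iff [IsProbabilityMeasure μ] (hN : Measurable N) (hf : Measurable f) (y : ℝ) :
    SLF μ N f y = 1 ↔ ∀ᵐ ω ∂μ, scaledIntegral (N ω) f y = 0 :=
  integral_expNeg_eq_one_iff (measurable_scaledIntegral hN hf y)

lemma monotoneOn_SLF_ramp [IsFiniteMeasure μ] (hN : Measurable N) :
    MonotoneOn (SLF μ N ramp) (Ioi 0) := fun y hy y' hy' hyy' =>
  integral_mono (integrable_expNeg (measurable_scaledIntegral hN measurable_ramp y))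
    (integrable_expNeg (measurable_scaledIntegral hN measurable_ramp y'))
    fun _ => expNeg_antitone (scaledIntegral_ramp_antitoneOn _ hy hy' hyy')

lemma measurableSet_null_tailSet (hN : Measurable N) (t : ℝ) :
    MeasurableSet {ω | N ω (tailSet t) = 0} :=
  (Measure.measurable_coe (measurableSet_tailSet t)).comp hN (measurableSet_singleton 0)

lemma SLF_natCast_mul_ramp_le [IsProbabilityMeasure μ] (hN : IsPointProcess μ N) (n : ℕ)
    (hy : 0 < y) :
    SLF μ N (fun u => n * ramp u) y ≤ Real.exp (-n) + μ.real {ω | N ω (tailSet y) = 0} := by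
  set E := {ω | N ω (tailSet y) = 0}
  have hE : MeasurableSet E := measurableSet_null_tailSet hN.1 y
  have hE1 : Integrable (E.indicator 1) μ := (integrable_const (1 : ℝ)).indicator hE
  calc SLF μ N (fun u => n * ramp u) y ≤ ∫ ω, (Real.exp (-n) + E.indicator 1 ω) ∂μ := by
        refine integral_mono_ae (integrable_expNeg (measurable_scaledIntegral hN.1
          (measurable_const.mul measurable_ramp) y)) ((integrable_const _).add hE1) ?_
        filter_upwards [hN.2.2.2] with ω hnat
        by_cases h0 : ω ∈ E
        · rw [indicator_of_mem h0, Pi.one_apply]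
          exact (expNeg_le_one _).trans (le_add_of_nonneg_left (Real.exp_pos _).le)
        · rw [indicator_of_notMem h0, add_zero]
          exact expNeg_scaledIntegral_natCast_mul_ramp_le _ hy n
            (hnat _ (measurableSet_tailSet y)) h0
    _ = Real.exp (-n) + μ.real E := by
        rw [integral_add (integrable_const _) hE1, integral_indicator_one hE]
        simp

lemma measureReal_null_tailSet_le_SLF_ramp [IsFiniteMeasure μ] (hN : Measurable N) {t : ℝ}
    (ht : 0 < t) : μ.real {ω | N ω (tailSet t) = 0} ≤ SLF μ N ramp (2 * t) := by
  have hE := measurableSet_null_tailSet hN t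
  rw [← integral_indicator_one hE]
  refine integral_mono ((integrable_const 1).indicator hE)
    (integrable_expNeg (measurable_scaledIntegral hN measurable_ramp _)) fun ω => ?_
  by_cases h0 : N ω (tailSet t) = 0
  · have hzero : scaledIntegral (N ω) ramp (2 * t) = 0 := by
      refine le_antisymm ((scaledIntegral_ramp_le_measure_tailSet _ (by positivity)).trans ?_)
        zero_le
      rw [mul_div_cancel_left₀ t two_ne_zero, h0]
    rw [indicator_of_mem (show ω ∈ {ω | N ω (tailSet t) = 0} from h0)]
    change (1 : ℝ) ≤ expNeg (scaledIntegral (N ω) ramp (2 * t))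
    rw [hzero, expNeg_zero]
  · rw [indicator_of_notMem (show ω ∉ {ω | N ω (tailSet t) = 0} from h0)]
    exact expNeg_nonneg _

lemma tendsto_measureReal_null_tailSet_one_div [IsProbabilityMeasure μ] (hN : IsPointProcess μ N)
    (hzero : μ {ω | N ω univ = 0} = 0) :
    Tendsto (fun n : ℕ => μ.real {ω | N ω (tailSet (1 / (n + 1))) = 0}) atTop (𝓝 0) := by
  have hlim := tendsto_measure_iInter_atTop
    (s := fun n : ℕ => {ω | N ω (tailSet (1 / (n + 1))) = 0})
    (fun n => (measurableSet_null_tailSet hN.1 _).nullMeasurableSet)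
    (fun m n hmn ω hω => measure_mono_null (tailSet_antitone (by gcongr)) hω)
    ⟨0, measure_ne_top μ _⟩
  have hnull : μ (⋂ n : ℕ, {ω | N ω (tailSet (1 / (n + 1))) = 0}) = 0 := by
    refine measure_mono_null_ae ?_ hzero
    filter_upwards [hN.2.1] with ω h0 hω
    have hω' : ω ∈ ⋂ n : ℕ, {ω | N ω (tailSet (1 / (n + 1))) = 0} := hω
    exact measure_univ_eq_zero_of_tailSet _ h0 fun n => mem_iInter.1 hω' n
  rw [hnull] at hlim
  simpa only [Function.comp_def, measureReal_def, ENNReal.toReal_zero] using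
    (ENNReal.tendsto_toReal ENNReal.zero_ne_top).comp hlim

lemma tendsto_measureReal_null_tailSet_natCast [IsProbabilityMeasure μ]
    (hN : IsPointProcess μ N) :
    Tendsto (fun n : ℕ => μ.real {ω | N ω (tailSet (n + 1)) = 0}) atTop (𝓝 1) := by
  have hlim := tendsto_measure_iUnion_atTop (μ := μ)
    (s := fun n : ℕ => {ω | N ω (tailSet (n + 1)) = 0})
    (fun m n hmn ω hω => measure_mono_null (tailSet_antitone (by gcongr)) hω)
  have hfull : μ (⋃ n : ℕ, {ω | N ω (tailSet (n + 1)) = 0}) = 1 := by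
    refine (mem_ae_iff_prob_eq_one (.iUnion fun n => measurableSet_null_tailSet hN.1 _)).1 ?_
    filter_upwards [hN.2.2.1, hN.2.2.2] with ω hfin hnat
    exact mem_iUnion.2 (exists_measure_tailSet_eq_zero _ hfin hnat)
  rw [hfull] at hlim
  simpa only [Function.comp_def, measureReal_def, ENNReal.toReal_one] using
    (ENNReal.tendsto_toReal ENNReal.one_ne_top).comp hlim

lemma SLF_ramp_add_ramp_two_mul_eq_one_iff [IsProbabilityMeasure μ] (hN : Measurable N)
    (hy : 0 < y) :
    SLF μ N (fun u => ramp u + ramp (2 * u)) y = 1 ↔ SLF μ N ramp (y / 2) = 1 := by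
  have hf : Measurable fun u => ramp u + ramp (2 * u) := by
    have := measurable_ramp
    fun_prop
  rw [SLF_eq_one_iff hN hf, SLF_eq_one_iff hN measurable_ramp]
  simp only [scaledIntegral_add_comp_two_mul _ measurable_ramp ramp_nonneg, add_eq_zero]
  refine ⟨fun h => h.mono fun ω hω => hω.2, fun h => h.mono fun ω hω => ⟨?_, hω⟩⟩
  exact nonpos_iff_eq_zero.1
    (hω ▸ scaledIntegral_ramp_antitoneOn _ (half_pos hy) hy (half_le_self hy.le))

lemma SLF_ramp_eq_one_of_SLF_ramp_add_ramp_two_mul_eq [IsProbabilityMeasure μ]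
    (hN : IsPointProcess μ N)
    (h : SLF μ N (fun u => ramp u + ramp (2 * u)) y = SLF μ N ramp (y / 2)) (hy : 0 < y) :
    SLF μ N ramp y = 1 := by
  rw [SLF_eq_one_iff hN.1 measurable_ramp]
  refine ae_eq_zero_of_integral_expNeg_add_eq (measurable_scaledIntegral hN.1 measurable_ramp y)
    (measurable_scaledIntegral hN.1 measurable_ramp (y / 2)) ?_ ?_
  · filter_upwards [hN.2.2.1] with ω hfin
    exact ((scaledIntegral_ramp_le_measure_tailSet _ (half_pos hy)).trans_lt
      (hfin _ (by positivity))).ne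
  · change ∫ ω, expNeg (scaledIntegral (N ω) (fun u => ramp u + ramp (2 * u)) y) ∂μ =
      ∫ ω, expNeg (scaledIntegral (N ω) ramp (y / 2)) ∂μ at h
    simpa only [scaledIntegral_add_comp_two_mul _ measurable_ramp ramp_nonneg] using h

end LaplaceFunctional

namespace ScaleUniqSupp

variable {Ω : Type*} [MeasurableSpace Ω] {μ : Measure Ω} {N : Ω → Measure ℝ} {g : ℝ → ℝ}

lemma exists_eq_SLF (hsupp : ScaleUniqSupp μ N g) {f : ℝ → ℝ} (hf : IsCcPos f) :
    ∃ c > 0, ∀ x > 0, g x = SLF μ N f (x / c) := by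
  obtain ⟨c, hc, hfc⟩ := hsupp f hf
  refine ⟨c, hc, fun x hx => ?_⟩
  rw [hfc _ (div_pos hx hc), mul_div_cancel₀ x hc.ne']

lemma monotoneOn [IsFiniteMeasure μ] (hsupp : ScaleUniqSupp μ N g) (hN : Measurable N) :
    MonotoneOn g (Ioi 0) := by
  obtain ⟨c, hc, hgc⟩ := hsupp.exists_eq_SLF isCcPos_ramp
  intro x hx x' hx' hxx'
  rw [hgc x hx, hgc x' hx']
  exact monotoneOn_SLF_ramp hN (div_pos hx hc) (div_pos hx' hc) (by gcongr)

lemma le_one [IsProbabilityMeasure μ] (hsupp : ScaleUniqSupp μ N g) (hN : Measurable N) :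
    ∀ x > 0, g x ≤ 1 := by
  obtain ⟨c, hc, hgc⟩ := hsupp.exists_eq_SLF isCcPos_ramp
  intro x hx
  rw [hgc x hx]
  exact SLF_le_one hN measurable_ramp _

lemma exists_lt [IsProbabilityMeasure μ] (hsupp : ScaleUniqSupp μ N g) (hN : IsPointProcess μ N)
    (hzero : μ {ω | N ω univ = 0} = 0) {ε : ℝ} (hε : 0 < ε) : ∃ x > 0, g x < ε := by
  obtain ⟨n, hn⟩ := ((Real.tendsto_exp_neg_atTop_nhds_zero.comp
    tendsto_natCast_atTop_atTop).eventually_lt_const (half_pos hε)).exists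
  obtain ⟨m, hm⟩ :=
    ((tendsto_measureReal_null_tailSet_one_div hN hzero).eventually_lt_const (half_pos hε)).exists
  obtain ⟨c, hc, hgc⟩ := hsupp _ (isCcPos_ramp.const_mul (Nat.cast_nonneg n))
  have hy : (0 : ℝ) < 1 / (m + 1) := by positivity
  refine ⟨c * (1 / (m + 1)), mul_pos hc hy, ?_⟩
  have := SLF_natCast_mul_ramp_le hN n hy
  simp only [Function.comp_apply] at hn
  linarith [hgc _ hy]

lemma exists_gt [IsProbabilityMeasure μ] (hsupp : ScaleUniqSupp μ N g) (hN : IsPointProcess μ N)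
    {w : ℝ} (hw : w < 1) : ∃ x > 0, w < g x := by
  obtain ⟨c, hc, hgc⟩ := hsupp.exists_eq_SLF isCcPos_ramp
  obtain ⟨m, hm⟩ :=
    ((tendsto_measureReal_null_tailSet_natCast hN).eventually_const_lt hw).exists
  refine ⟨c * (2 * (m + 1)), by positivity, ?_⟩
  rw [hgc _ (by positivity), mul_div_cancel_left₀ _ hc.ne']
  exact hm.trans_le (measureReal_null_tailSet_le_SLF_ramp hN.1 (by positivity))

lemma lt_one [IsProbabilityMeasure μ] (hsupp : ScaleUniqSupp μ N g) (hN : IsPointProcess μ N)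
    {t : ℝ} (ht : 0 < t) (hgt : g t < 1) : ∀ x > 0, g x < 1 := by
  by_contra! ⟨x, hx, hgx⟩
  obtain ⟨c, hc, hgc⟩ := hsupp ramp isCcPos_ramp
  obtain ⟨c', hc', hgc'⟩ := hsupp _ (isCcPos_ramp.add (isCcPos_ramp.comp_const_mul two_pos))
  set S := {x | 0 < x ∧ g x = 1}
  have hS : ∀ s ∈ S, t ≤ s := fun s ⟨hs, hgs⟩ =>
    le_of_not_gt fun hst => (hgs ▸ hsupp.monotoneOn hN.1 hs ht hst.le).not_gt hgt
  have hne : S.Nonempty := ⟨x, hx, le_antisymm (hsupp.le_one hN.1 x hx) hgx⟩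
  have hmem : ∀ y > 0, c' * y ∈ S ↔ c / 2 * y ∈ S := by
    intro y hy
    rw [show c / 2 * y = c * (y / 2) by ring]
    simp only [S, mem_ofPred_eq, mul_pos hc' hy, mul_pos hc (half_pos hy), true_and,
      ← hgc' y hy, ← hgc _ (half_pos hy)]
    exact SLF_ramp_add_ramp_two_mul_eq_one_iff hN.1 hy
  have hc'_eq : c' = c / 2 :=
    le_antisymm (le_of_forall_mul_mem_imp ht hS hne (half_pos hc) hc' fun y hy => (hmem y hy).1)
      (le_of_forall_mul_mem_imp ht hS hne hc' (half_pos hc) fun y hy => (hmem y hy).2)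
  have hone := SLF_ramp_eq_one_of_SLF_ramp_add_ramp_two_mul_eq hN
    (by rw [hgc' _ (div_pos ht hc), hgc _ (half_pos (div_pos ht hc)), hc'_eq]; ring_nf)
    (div_pos ht hc)
  rw [hgc _ (div_pos ht hc), mul_div_cancel₀ t hc.ne'] at hone
  exact hgt.ne hone

end ScaleUniqSupp

theorem stmt5_general {Ω : Type*} [MeasurableSpace Ω] (μ : Measure Ω) [IsProbabilityMeasure μ]
    (N : Ω → Measure ℝ) (hN : IsPointProcess μ N)
    (hzero : μ {ω | N ω Set.univ = 0} = 0)
    (g : ℝ → ℝ) (hg : ∀ x > 0, 0 < g x)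
    (hsupp : ScaleUniqSupp μ N g) :
    sInf (g '' Set.Ioi 0) = 0 ∧ sSup (g '' Set.Ioi 0) = 1 ∧
      ∀ x > 0, 0 < g x ∧ g x < 1 := by
  obtain ⟨t, ht, hgt⟩ := hsupp.exists_lt hN hzero one_pos
  have hne : (g '' Ioi 0).Nonempty := (nonempty_Ioi (a := (0 : ℝ))).image g
  refine ⟨csInf_eq_of_forall_ge_of_forall_gt_exists_lt hne ?_ ?_,
    csSup_eq_of_forall_le_of_forall_lt_exists_gt hne ?_ ?_,
    fun x hx => ⟨hg x hx, hsupp.lt_one hN ht hgt x hx⟩⟩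
  · rintro _ ⟨x, hx, rfl⟩
    exact (hg x hx).le
  · intro w hw
    obtain ⟨x, hx, hgx⟩ := hsupp.exists_lt hN hzero hw
    exact ⟨g x, mem_image_of_mem g hx, hgx⟩
  · rintro _ ⟨x, hx, rfl⟩
    exact hsupp.le_one hN.1 x hx
  · intro w hw
    obtain ⟨x, hx, hgx⟩ := hsupp.exists_gt hN hw
    exact ⟨g x, mem_image_of_mem g hx, hgx⟩

/-- under `P(N(ℝ̄₀)=0) = 0` and a finite-mean condition, if the scaled Laplace
functional of `N` is scale-uniquely supported on `[g]_sc` with `g : (0,∞) → (0,∞)`, then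
`inf g = 0`, `sup g = 1`, and `0 < g(x) < 1` for all `x > 0` (neither bound is attained). -/
theorem stmt5 {Ω : Type*} [MeasurableSpace Ω] (μ : Measure Ω) [IsProbabilityMeasure μ]
    (N : Ω → Measure ℝ) (hN : IsPointProcess μ N)
    (hzero : μ {ω | N ω Set.univ = 0} = 0)
    (hfin : ∃ a > 0, ∫⁻ ω, (N ω) {x : ℝ | a ≤ |x|} ∂μ < ∞)
    (g : ℝ → ℝ) (hg : ∀ x > 0, 0 < g x)
    (hsupp : ScaleUniqSupp μ N g) :
    sInf (g '' Set.Ioi 0) = 0 ∧ sSup (g '' Set.Ioi 0) = 1 ∧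
      ∀ x > 0, 0 < g x ∧ g x < 1 :=
  stmt5_general μ N hN hzero g hg hsupp
end
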